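/- The reduced word of φ^{D+2}(c_D) has length 10D + 5. -/

import Mathlib

abbrev G : Type := FreeGroup (ℤ ⊕ ℤ)

/-- generator cₙ -/
def c (n : ℤ) : G := FreeGroup.of (Sum.inl n)
/-- generator uₙ -/
def u (n : ℤ) : G := FreeGroup.of (Sum.inr n)

/-- F = c₁ c₂ ⋯ c_D -/
def F (D : ℕ) : G := ((List.range D).map (fun i => c ((i : ℤ) + 1))).prod

/-- the tangle endomorphism for minimum delay time D -/
def φ (D : ℕ) : G →* G := FreeGroup.lift fun x =>
  match x with
  | Sum.inl n => if n = (D : ℤ) then (F D)⁻¹ * (u 0)⁻¹ * F D else c (n + 1)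
  | Sum.inr n => u (n + 1)

/-!
`φ` shifts every generator except `c_D`, so `φ(F) = c₁⁻¹ u₀⁻¹ F`, and by induction
`φʲ(F) = W_j⁻¹ F` for `j ≤ D`, where `W_j = u₀ c₁ u₁ c₂ ⋯ u_{j-1} c_j`. One more step, where `c_D`
inside `W_D` is hit, gives `B := φ^{D+1}(F) = F⁻¹ u₀ F u_D⁻¹ W_D⁻¹ F`, and since
`φ(c_D) = F⁻¹ u₀⁻¹ F` we get `φ^{D+2}(c_D) = B⁻¹ u_{D+1}⁻¹ B`. Spelled out letter by letter this
word has no two adjacent mutually inverse letters, so it is reduced, of length `2 (5D + 2) + 1`.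
-/

namespace FreeGroup

variable {α : Type*} {L L₁ L₂ : List (α × Bool)}

theorem head?_invRev : (invRev L).head? = L.getLast?.map fun x => (x.1, !x.2) := by
  rw [invRev, List.head?_reverse, List.getLast?_map]

theorem getLast?_invRev : (invRev L).getLast? = L.head?.map fun x => (x.1, !x.2) := by
  rw [invRev, List.getLast?_reverse, List.head?_map]

theorem mk_cons (a : α × Bool) (L : List (α × Bool)) : mk (a :: L) = mk [a] * mk L :=
  (mul_mk (L₁ := [a])).symm

theorem mk_invRev_append_cons (L : List (α × Bool)) (a : α × Bool) :
    mk (invRev L ++ a :: L) = (mk L)⁻¹ * mk [a] * mk L := by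
  rw [inv_mk, mul_mk, mul_mk, List.append_assoc, List.singleton_append]

theorem isReduced_of_forall_snd_eq {b : Bool} (h : ∀ x ∈ L, x.2 = b) : IsReduced L :=
  List.Pairwise.isChain <| List.pairwise_of_forall_mem_list fun x hx y hy _ => by
    rw [h x hx, h y hy]

theorem IsReduced.invRev (h : IsReduced L) : IsReduced (invRev L) := by
  rw [IsReduced, FreeGroup.invRev, List.isChain_reverse, List.isChain_map]
  exact h.imp fun a b hab h₁ => by simpa using (hab h₁.symm).symm

theorem IsReduced.append (h₁ : IsReduced L₁) (h₂ : IsReduced L₂)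
    (h : ∀ a ∈ L₁.getLast?, ∀ b ∈ L₂.head?, a.1 = b.1 → a.2 = b.2) : IsReduced (L₁ ++ L₂) :=
  List.isChain_append.2 ⟨h₁, h₂, h⟩

theorem IsReduced.cons {a : α × Bool} (h : IsReduced L)
    (ha : ∀ b ∈ L.head?, a.1 = b.1 → a.2 = b.2) : IsReduced (a :: L) :=
  IsReduced.singleton.append h (by simpa using ha)

theorem IsReduced.invRev_append_cons {a : α × Bool} (h : IsReduced L)
    (ha : ∀ b ∈ L.head?, a.1 ≠ b.1) : IsReduced (FreeGroup.invRev L ++ a :: L) := by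
  refine h.invRev.append (h.cons fun b hb hab => (ha b hb hab).elim) ?_
  simp only [getLast?_invRev, Option.mem_map, List.head?_cons, Option.mem_some_iff]
  rintro _ ⟨y, hy, rfl⟩ _ rfl hya
  exact (ha y hy hya.symm).elim

end FreeGroup

theorem φ_c_of_ne {D : ℕ} {n : ℤ} (h : n ≠ D) : φ D (c n) = c (n + 1) := by
  simp [φ, c, h]

theorem φ_c_self (D : ℕ) : φ D (c D) = (F D)⁻¹ * (u 0)⁻¹ * F D := by
  simp [φ, c]

theorem φ_u (D : ℕ) (n : ℤ) : φ D (u n) = u (n + 1) := by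
  simp [φ, u]

theorem iterate_φ_u (D k : ℕ) (n : ℤ) : (φ D)^[k] (u n) = u (n + k) := by
  induction k with
  | zero => simp
  | succ k ih => rw [Function.iterate_succ_apply', ih, φ_u]; push_cast; ring_nf

theorem F_succ (j : ℕ) : F (j + 1) = F j * c (j + 1) := by
  simp [F, List.range_succ]

def W (j : ℕ) : G := ((List.range j).map fun i : ℕ => u i * c ((i : ℤ) + 1)).prod

theorem W_succ (j : ℕ) : W (j + 1) = W j * (u j * c (j + 1)) := by
  simp [W, List.range_succ]

theorem φ_F_of_lt {D j : ℕ} (h : j < D) : φ D (F j) = (c 1)⁻¹ * F (j + 1) := by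
  induction j with
  | zero => simp [F]
  | succ j ih =>
    rw [F_succ, map_mul, ih (by omega), φ_c_of_ne (by omega), F_succ (j + 1)]
    push_cast
    group

theorem φ_W_of_lt {D j : ℕ} (h : j < D) : φ D (W j) = (u 0 * c 1)⁻¹ * W (j + 1) := by
  induction j with
  | zero => simp [W]
  | succ j ih =>
    rw [W_succ, map_mul, ih (by omega), map_mul, φ_u, φ_c_of_ne (by omega), W_succ (j + 1)]
    push_cast
    group

theorem φ_c_natCast_succ (E : ℕ) :
    φ (E + 1) (c ((E : ℤ) + 1)) = (F (E + 1))⁻¹ * (u 0)⁻¹ * F (E + 1) := by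
  exact_mod_cast φ_c_self (E + 1)

theorem φ_F_self {D : ℕ} (hD : 1 ≤ D) : φ D (F D) = (c 1)⁻¹ * (u 0)⁻¹ * F D := by
  obtain ⟨E, rfl⟩ := Nat.exists_eq_add_of_le' hD
  conv_lhs => rw [F_succ, map_mul, φ_F_of_lt (Nat.lt_succ_self E), φ_c_natCast_succ]
  group

theorem iterate_φ_F {D j : ℕ} (hD : 1 ≤ D) (hj : j ≤ D) :
    (φ D)^[j] (F D) = (W j)⁻¹ * F D := by
  induction j with
  | zero => simp [W]
  | succ j ih =>
    rw [Function.iterate_succ_apply', ih (by omega), map_mul, map_inv, φ_W_of_lt hj, φ_F_self hD]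
    group

theorem iterate_φ_F_succ {D : ℕ} (hD : 1 ≤ D) :
    (φ D)^[D + 1] (F D) = (F D)⁻¹ * u 0 * F D * (u D)⁻¹ * (W D)⁻¹ * F D := by
  obtain ⟨E, rfl⟩ := Nat.exists_eq_add_of_le' hD
  have hW : φ (E + 1) (W (E + 1)) =
      (u 0 * c 1)⁻¹ * W (E + 1) * u (E + 1) * (F (E + 1))⁻¹ * (u 0)⁻¹ * F (E + 1) := by
    conv_lhs =>
      rw [W_succ, map_mul, map_mul, φ_W_of_lt (Nat.lt_succ_self E), φ_u, φ_c_natCast_succ]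
    group
  rw [Function.iterate_succ_apply', iterate_φ_F hD le_rfl, map_mul, map_inv, hW, φ_F_self hD]
  push_cast
  group

theorem iterate_φ_c_self (D : ℕ) :
    (φ D)^[D + 2] (c D) = ((φ D)^[D + 1] (F D))⁻¹ * (u (D + 1))⁻¹ * (φ D)^[D + 1] (F D) := by
  rw [Function.iterate_succ_apply, φ_c_self, iterate_map_mul, iterate_map_mul, iterate_map_inv,
    iterate_map_inv, iterate_φ_u]
  simp

section Words

open FreeGroup

def wordF (j : ℕ) : List ((ℤ ⊕ ℤ) × Bool) :=
  (List.range j).map fun i : ℕ => (Sum.inl ((i : ℤ) + 1), true)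

def wordW (j : ℕ) : List ((ℤ ⊕ ℤ) × Bool) :=
  (List.range j).flatMap fun i : ℕ => [(Sum.inr (i : ℤ), true), (Sum.inl ((i : ℤ) + 1), true)]

theorem F_eq_mk (j : ℕ) : F j = mk (wordF j) := by
  induction j with
  | zero => rfl
  | succ j ih =>
    rw [F_succ, ih, wordF, wordF, List.range_succ, List.map_append, ← mul_mk]
    rfl

theorem W_eq_mk (j : ℕ) : W j = mk (wordW j) := by
  induction j with
  | zero => rfl
  | succ j ih =>
    rw [W_succ, ih, wordW, wordW, List.range_succ, List.flatMap_append, ← mul_mk]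
    rfl

theorem isReduced_wordF (j : ℕ) : IsReduced (wordF j) :=
  isReduced_of_forall_snd_eq (b := true) (by simp [wordF])

theorem isReduced_wordW (j : ℕ) : IsReduced (wordW j) :=
  isReduced_of_forall_snd_eq (b := true) (by simp [wordW])

theorem head?_wordF (j : ℕ) : (wordF (j + 1)).head? = some (Sum.inl 1, true) := by
  rw [wordF, List.range_succ_eq_map]; rfl

theorem getLast?_wordF (j : ℕ) :
    (wordF (j + 1)).getLast? = some (Sum.inl ((j : ℤ) + 1), true) := by
  rw [wordF, List.range_succ, List.map_append, List.getLast?_append]; rfl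

theorem head?_wordW (j : ℕ) : (wordW (j + 1)).head? = some (Sum.inr 0, true) := by
  rw [wordW, List.range_succ_eq_map]; rfl

theorem getLast?_wordW (j : ℕ) :
    (wordW (j + 1)).getLast? = some (Sum.inl ((j : ℤ) + 1), true) := by
  rw [wordW, List.range_succ, List.flatMap_append, List.getLast?_append]; rfl

theorem length_wordF (j : ℕ) : (wordF j).length = j := by
  simp [wordF]

theorem length_wordW (j : ℕ) : (wordW j).length = 2 * j := by
  simp [wordW, mul_comm]

def wordB (D : ℕ) : List ((ℤ ⊕ ℤ) × Bool) :=
  (invRev (wordF D) ++ (Sum.inr 0, true) :: wordF D) ++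
    (Sum.inr (D : ℤ), false) :: (invRev (wordW D) ++ wordF D)

theorem mk_wordB (D : ℕ) :
    mk (wordB D) = (F D)⁻¹ * u 0 * F D * (u D)⁻¹ * (W D)⁻¹ * F D := by
  rw [wordB, ← mul_mk, mk_invRev_append_cons, mk_cons (Sum.inr (D : ℤ), false), ← mul_mk,
    ← inv_mk, ← F_eq_mk, ← W_eq_mk]
  simp only [mul_assoc]
  rfl

theorem head?_wordB {D : ℕ} (hD : 1 ≤ D) : (wordB D).head? = some (Sum.inl (D : ℤ), false) := by
  obtain ⟨E, rfl⟩ := Nat.exists_eq_add_of_le' hD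
  simp [wordB, head?_invRev, getLast?_wordF]

theorem isReduced_wordB {D : ℕ} (hD : 1 ≤ D) : IsReduced (wordB D) := by
  obtain ⟨E, rfl⟩ := Nat.exists_eq_add_of_le' hD
  have hF := isReduced_wordF (E + 1)
  refine (hF.invRev_append_cons ?_).append (((isReduced_wordW _).invRev.append hF ?_).cons ?_) ?_
  all_goals simp [List.getLast?_cons, head?_invRev, getLast?_invRev, head?_wordF, getLast?_wordF,
    head?_wordW, getLast?_wordW]

theorem length_wordB (D : ℕ) : (wordB D).length = 5 * D + 2 := by
  simp [wordB, invRev_length, length_wordF, length_wordW]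
  omega

end Words

theorem stmt_14 (D : ℕ) (hD : 1 ≤ D) :
    ((⇑(φ D))^[D + 2] (c D)).toWord.length = 10 * D + 5 := by
  have hword : (φ D)^[D + 2] (c D) =
      FreeGroup.mk (FreeGroup.invRev (wordB D) ++ (Sum.inr ((D : ℤ) + 1), false) :: wordB D) := by
    rw [iterate_φ_c_self, iterate_φ_F_succ hD, ← mk_wordB, FreeGroup.mk_invRev_append_cons]
    rfl
  have hreduced := (isReduced_wordB hD).invRev_append_cons
    (a := (Sum.inr ((D : ℤ) + 1), false)) (by simp [head?_wordB hD])
  rw [hword, FreeGroup.toWord_mk, hreduced.reduce_eq]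
  simp [FreeGroup.invRev_length, length_wordB]
  omega
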